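/- arXiv:0902.0841 — 2 statements merged into one kernel-verified Lean document; each statement's English description precedes it below -/
import Mathlib

section
/- g(4) = 3: there exists a correct adaptive strategy of depth 3 in the heavier-fakes model on 4 coins, but there is no correct adaptive strategy of depth 2 on 4 coins (a fact used in the proof of Lemma 2). -/
/-!
Adaptive weighing model with heavier fakes and reference coins.
Coins are the elements of `Fin n`; the unknown fake set is an arbitrary
`F : Finset (Fin n)`.  A weighing is a pair `(L, R)` of disjoint subsets of
`Fin n` (pans may be padded with known-genuine reference coins, so `L` and `R`
need not have the same size), and its outcome is the three-valued comparison
of `|L ∩ F|` and `|R ∩ F|`.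
-/

/-- Outcome of weighing pans `L` and `R` when the fake set is `F`. -/
def weighOutcome {n : ℕ} (L R F : Finset (Fin n)) : Ordering :=
  compare (L ∩ F).card (R ∩ F).card

/-- The outcome sequence produced by fake set `F` after `k` weighings of the
adaptive strategy `weigh` (which assigns a weighing to each outcome history). -/
def runList {n : ℕ} (weigh : List Ordering → Finset (Fin n) × Finset (Fin n))
    (F : Finset (Fin n)) : ℕ → List Ordering
  | 0 => []
  | k + 1 =>
    let σ := runList weigh F k
    σ ++ [weighOutcome (weigh σ).1 (weigh σ).2 F]

/-- `(weigh, answer)` is a correct adaptive strategy of depth `k` on `n` coins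
in the heavier-fakes model: every prescribed weighing has disjoint pans, and
for every fake set `F` the answer at the outcome sequence produced by `F`
equals `F`. -/
def IsCorrectStrategy (n k : ℕ)
    (weigh : List Ordering → Finset (Fin n) × Finset (Fin n))
    (answer : List Ordering → Finset (Fin n)) : Prop :=
  (∀ σ : List Ordering, σ.length < k → Disjoint (weigh σ).1 (weigh σ).2) ∧
  (∀ F : Finset (Fin n), answer (runList weigh F k) = F)

/-- There is a correct adaptive strategy of depth `k` on `n` coins. -/
def HasStrategy (n k : ℕ) : Prop :=
  ∃ weigh answer, IsCorrectStrategy n k weigh answer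

/-- `g n` is the least number of weighings sufficient to find all the fakes
among `n` coins in the heavier-fakes model. -/
noncomputable def g (n : ℕ) : ℕ := sInf {k | HasStrategy n k}

/-!
Counting: a depth-`k` strategy separates the `2 ^ n` fake sets by their outcome sequences, of
which there are only `3 ^ k`; since `3 ^ 2 < 2 ^ 4`, two weighings do not suffice for four coins.
Three do: weigh coin `0` against coin `1`. An imbalance identifies both coins, and `2` against `3`
followed if necessary by `2` alone settles the rest. A balance means `0, 1` are both fake or
both genuine; then `{0, 1}` against `{2, 3}` leaves at most three possibilities, which one more
weighing separates.
-/

lemma runList_length {n : ℕ} (weigh : List Ordering → Finset (Fin n) × Finset (Fin n))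
    (F : Finset (Fin n)) (k : ℕ) : (runList weigh F k).length = k := by
  induction k with
  | zero => rfl
  | succ k ih => simp [runList, ih]

lemma HasStrategy.two_pow_le_three_pow {n k : ℕ} (h : HasStrategy n k) : 2 ^ n ≤ 3 ^ k := by
  obtain ⟨weigh, answer, -, hanswer⟩ := h
  let outcomes : Finset (Fin n) → List.Vector Ordering k :=
    fun F => ⟨runList weigh F k, runList_length weigh F k⟩
  have houtcomes : Function.Injective outcomes := fun F F' hFF' => by
    rw [← hanswer F, ← hanswer F']
    exact congrArg answer (congrArg Subtype.val hFF')
  simpa [show Fintype.card Ordering = 3 from rfl] using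
    Fintype.card_le_of_injective outcomes houtcomes

lemma HasStrategy.three_le_of_four {k : ℕ} (h : HasStrategy 4 k) : 3 ≤ k := by
  by_contra! hk
  have h16 := h.two_pow_le_three_pow
  interval_cases k <;> norm_num at h16

def fourCoinWeigh : List Ordering → Finset (Fin 4) × Finset (Fin 4)
  | [] => ({0}, {1})
  | [.eq] => ({0, 1}, {2, 3})
  | [_] => ({2}, {3})
  | [.gt, .eq] | [.lt, .eq] => ({2}, ∅)
  | [.eq, .eq] => ({0}, ∅)
  | [.eq, _] => ({2}, {3})
  | _ => (∅, ∅)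

def fourCoinAnswer : List Ordering → Finset (Fin 4)
  | [.gt, .gt, _] => {0, 2}
  | [.gt, .lt, _] => {0, 3}
  | [.gt, .eq, .gt] => {0, 2, 3}
  | [.gt, .eq, _] => {0}
  | [.lt, .gt, _] => {1, 2}
  | [.lt, .lt, _] => {1, 3}
  | [.lt, .eq, .gt] => {1, 2, 3}
  | [.lt, .eq, _] => {1}
  | [.eq, .eq, .gt] => {0, 1, 2, 3}
  | [.eq, .eq, _] => ∅
  | [.eq, .lt, .gt] => {2}
  | [.eq, .lt, .lt] => {3}
  | [.eq, .lt, _] => {2, 3}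
  | [.eq, .gt, .gt] => {0, 1, 2}
  | [.eq, .gt, .lt] => {0, 1, 3}
  | [.eq, .gt, _] => {0, 1}
  | _ => ∅

lemma disjoint_fourCoinWeigh (σ : List Ordering) :
    Disjoint (fourCoinWeigh σ).1 (fourCoinWeigh σ).2 := by
  unfold fourCoinWeigh
  split <;> decide

lemma isCorrectStrategy_fourCoin : IsCorrectStrategy 4 3 fourCoinWeigh fourCoinAnswer :=
  ⟨fun σ _ => disjoint_fourCoinWeigh σ, by decide⟩

/-- **`g 4 = 3` (used in the proof of Lemma 2).** There is a correct adaptive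
strategy of depth `3` on `4` coins, but none of depth `2`. -/
theorem g_four_eq_three :
    HasStrategy 4 3 ∧ ¬ HasStrategy 4 2 ∧ g 4 = 3 := by
  have h3 : HasStrategy 4 3 := ⟨_, _, isCorrectStrategy_fourCoin⟩
  exact ⟨h3, fun h2 => absurd h2.three_le_of_four (by norm_num),
    IsLeast.csInf_eq ⟨h3, fun _ hk => hk.three_le_of_four⟩⟩
end

section
/- Lemma 2: for every n ≥ 1 and every k ≥ 1, if there exists a correct adaptive strategy of depth k in the heavier-fakes model on n coins, then there exists a correct adaptive strategy of depth k + 2 on n + 3 coins. Consequently g(n + 3) ≤ g(n) + 2 for all n ≥ 1. -/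
/-!
Set aside one of the `n` old coins; together with the three new ones it forms a gadget of four
coins. Weighing two gadget coins against the other two, and then once more within the gadget
depending on the outcome, leaves at most two candidates for the fakes among the gadget, and they
differ at a pivot coin read off from the two outcomes (a finite check). Running the given strategy
with the pivot in place of the set-aside coin then finds all fakes outside the gadget together with
the status of the pivot, which singles out the candidate.

Weighing the coins one at a time shows that `g n` is the minimum of a nonempty set, so the bound on
`g` follows.
-/

open Finset Function

def PansDisjoint {n : ℕ} (weigh : List Ordering → Finset (Fin n) × Finset (Fin n)) (k : ℕ) :
    Prop :=
  ∀ σ : List Ordering, σ.length < k → Disjoint (weigh σ).1 (weigh σ).2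

section Relabel

variable {m N : ℕ} (f : Fin m ↪ Fin N)

def mapPans : Finset (Fin m) × Finset (Fin m) → Finset (Fin N) × Finset (Fin N) :=
  Prod.map (map f) (map f)

theorem weighOutcome_mapPans (W : Finset (Fin m) × Finset (Fin m)) (F : Finset (Fin N)) :
    weighOutcome (mapPans f W).1 (mapPans f W).2 F =
      weighOutcome W.1 W.2 (F.preimage f f.injective.injOn) := by
  have card_eq (P : Finset (Fin m)) :
      (P.map f ∩ F).card = (P ∩ F.preimage f f.injective.injOn).card := by
    rw [← card_map f]
    congr 1
    ext z
    simp only [mem_inter, mem_map, mem_preimage]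
    constructor
    · rintro ⟨⟨i, hi, rfl⟩, hz⟩
      exact ⟨i, ⟨hi, hz⟩, rfl⟩
    · rintro ⟨i, ⟨hi, hz⟩, rfl⟩
      exact ⟨⟨i, hi, rfl⟩, hz⟩
  simp only [weighOutcome, mapPans, Prod.map_fst, Prod.map_snd, card_eq]

theorem runList_comp_mapPans (weigh : List Ordering → Finset (Fin m) × Finset (Fin m))
    (F : Finset (Fin N)) (k : ℕ) :
    runList (mapPans f ∘ weigh) F k = runList weigh (F.preimage f f.injective.injOn) k := by
  induction k with
  | zero => rfl
  | succ k ih => simp only [runList, ih, comp_apply, weighOutcome_mapPans]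

theorem disjoint_mapPans {W : Finset (Fin m) × Finset (Fin m)} (h : Disjoint W.1 W.2) :
    Disjoint (mapPans f W).1 (mapPans f W).2 :=
  (disjoint_map f).mpr h

theorem PansDisjoint.comp_mapPans {weigh : List Ordering → Finset (Fin m) × Finset (Fin m)}
    {k : ℕ} (h : PansDisjoint weigh k) : PansDisjoint (mapPans f ∘ weigh) k :=
  fun σ hσ => disjoint_mapPans f (h σ hσ)

end Relabel

section Prepend

variable {n : ℕ}

def consWeigh (W : Finset (Fin n) × Finset (Fin n))
    (cont : Ordering → List Ordering → Finset (Fin n) × Finset (Fin n)) :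
    List Ordering → Finset (Fin n) × Finset (Fin n)
  | [] => W
  | o :: τ => cont o τ

theorem runList_consWeigh (W : Finset (Fin n) × Finset (Fin n))
    (cont : Ordering → List Ordering → Finset (Fin n) × Finset (Fin n)) (F : Finset (Fin n))
    (k : ℕ) :
    runList (consWeigh W cont) F (k + 1) =
      weighOutcome W.1 W.2 F :: runList (cont (weighOutcome W.1 W.2 F)) F k := by
  induction k with
  | zero => rfl
  | succ k ih =>
    rw [runList, ih]
    rfl

theorem PansDisjoint.consWeigh {W : Finset (Fin n) × Finset (Fin n)}
    {cont : Ordering → List Ordering → Finset (Fin n) × Finset (Fin n)} {k : ℕ}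
    (hW : Disjoint W.1 W.2) (hcont : ∀ o, PansDisjoint (cont o) k) :
    PansDisjoint (consWeigh W cont) (k + 1)
  | [], _ => hW
  | o :: τ, hσ => hcont o τ (by simpa using hσ)

end Prepend

theorem hasStrategy_zero : HasStrategy 0 0 :=
  ⟨fun _ => (∅, ∅), fun _ => ∅, fun _ h => absurd h (Nat.not_lt_zero _),
    fun _ => Subsingleton.elim _ _⟩

theorem HasStrategy.succ {m k : ℕ} (h : HasStrategy m k) : HasStrategy (m + 1) (k + 1) := by
  obtain ⟨weigh, answer, hdisj, hcorrect⟩ := h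
  refine ⟨consWeigh ({Fin.last m}, ∅) (fun _ => mapPans Fin.castSuccEmb ∘ weigh),
    fun σ =>
      (answer σ.tail).map Fin.castSuccEmb ∪ if σ.head? = some .gt then {Fin.last m} else ∅,
    PansDisjoint.consWeigh (disjoint_empty_right _) (fun _ => PansDisjoint.comp_mapPans _ hdisj),
    fun F => ?_⟩
  simp only [runList_consWeigh, runList_comp_mapPans, List.tail_cons, List.head?_cons, hcorrect]
  ext z
  by_cases hlast : Fin.last m ∈ F <;> cases z using Fin.lastCases <;>
    simp [weighOutcome, hlast, compare_gt_iff_gt]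

theorem hasStrategy_self : ∀ n, HasStrategy n n
  | 0 => hasStrategy_zero
  | n + 1 => (hasStrategy_self n).succ

theorem map_preimage_castAdd_union_map_preimage_natAdd {m n : ℕ} (F : Finset (Fin (m + n))) :
    (F.preimage _ (Fin.castAddEmb n).injective.injOn).map (Fin.castAddEmb n) ∪
      (F.preimage _ (Fin.natAddEmb m).injective.injOn).map (Fin.natAddEmb m) = F := by
  ext z
  simp only [mem_union, mem_map, mem_preimage]
  constructor
  · rintro (⟨i, hi, rfl⟩ | ⟨j, hj, rfl⟩) <;> assumption
  · intro hz
    cases z using Fin.addCases with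
    | left i => exact Or.inl ⟨i, hz, rfl⟩
    | right j => exact Or.inr ⟨j, hz, rfl⟩

namespace Gadget

def firstWeighing : Finset (Fin 4) × Finset (Fin 4) := ({0, 1}, {2, 3})

def secondWeighing : Ordering → Finset (Fin 4) × Finset (Fin 4)
  | .lt => ({2}, {0, 3})
  | .eq => ({0}, {1})
  | .gt => ({0}, {1, 2})

def pivot : Ordering → Ordering → Fin 4
  | .lt, .eq => 1 | .eq, .lt => 2 | .eq, .gt => 2 | .gt, .eq => 3 | _, _ => 0

def signature (S : Finset (Fin 4)) : Ordering × Ordering × Bool :=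
  let o₁ := weighOutcome firstWeighing.1 firstWeighing.2 S
  let o₂ := weighOutcome (secondWeighing o₁).1 (secondWeighing o₁).2 S
  (o₁, o₂, decide (pivot o₁ o₂ ∈ S))

theorem signature_injective : Injective signature := by decide

theorem firstWeighing_disjoint : Disjoint firstWeighing.1 firstWeighing.2 := by decide

theorem secondWeighing_disjoint (o : Ordering) :
    Disjoint (secondWeighing o).1 (secondWeighing o).2 := by
  cases o <;> decide

end Gadget

open Gadget in
theorem HasStrategy.add_three {n k : ℕ} (hn : 1 ≤ n) (h : HasStrategy n k) :
    HasStrategy (n + 3) (k + 2) := by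
  obtain ⟨m, rfl⟩ := Nat.exists_eq_add_of_le' hn
  obtain ⟨weigh, answer, hdisj, hcorrect⟩ := h
  -- Coins `Fin.castAdd 4 i` are the old ones but the last, `Fin.natAdd m j` the gadget; the
  -- old strategy runs with its last coin replaced by the pivot.
  let c : Fin 4 ↪ Fin (m + 4) := Fin.natAddEmb m
  let e (p : Fin 4) : Fin (m + 1) ↪ Fin (m + 4) :=
    Fin.Embedding.snoc (Fin.castAddEmb 4) (a := c p) (by simp [c])
  refine ⟨consWeigh (mapPans c firstWeighing) fun o₁ =>
      consWeigh (mapPans c (secondWeighing o₁)) fun o₂ =>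
        mapPans (e (pivot o₁ o₂)) ∘ weigh,
    fun
      | o₁ :: o₂ :: τ =>
        ((answer τ).preimage _ Fin.castSuccEmb.injective.injOn).map (Fin.castAddEmb 4) ∪
          (invFun signature (o₁, o₂, decide (Fin.last m ∈ answer τ))).map c
      | _ => ∅,
    PansDisjoint.consWeigh (disjoint_mapPans c firstWeighing_disjoint) fun o₁ =>
      PansDisjoint.consWeigh (disjoint_mapPans c (secondWeighing_disjoint o₁)) fun _ =>
        PansDisjoint.comp_mapPans _ hdisj,
    fun F => ?_⟩
  simp only [runList_consWeigh, runList_comp_mapPans, weighOutcome_mapPans, hcorrect]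
  set S := F.preimage c c.injective.injOn
  have hlast (p : Fin 4) : Fin.last m ∈ F.preimage (e p) (e p).injective.injOn ↔ p ∈ S := by
    simp [e, S]
  have hinit (p : Fin 4) :
      (F.preimage (e p) (e p).injective.injOn).preimage _ Fin.castSuccEmb.injective.injOn =
        F.preimage _ (Fin.castAddEmb 4).injective.injOn := by
    ext i
    simp [e]
  have hdecode : invFun signature (signature S) = S :=
    leftInverse_invFun signature_injective S
  simp only [signature] at hdecode
  simp only [hlast, hinit, hdecode]
  exact map_preimage_castAdd_union_map_preimage_natAdd (m := m) (n := 4) F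

/-- **Lemma 2.** For every `n ≥ 1` and `k ≥ 1`, a correct adaptive strategy of
depth `k` on `n` coins yields a correct adaptive strategy of depth `k + 2` on
`n + 3` coins; consequently `g (n + 3) ≤ g n + 2` for all `n ≥ 1`. -/
theorem counterfeit_add_three_coins :
    (∀ n k : ℕ, 1 ≤ n → 1 ≤ k → HasStrategy n k → HasStrategy (n + 3) (k + 2)) ∧
    (∀ n : ℕ, 1 ≤ n → g (n + 3) ≤ g n + 2) := by
  refine ⟨fun _ _ hn _ h => h.add_three hn, fun n hn => Nat.sInf_le ?_⟩
  have hg : HasStrategy n (g n) :=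
    Nat.sInf_mem (s := {k | HasStrategy n k}) ⟨n, hasStrategy_self n⟩
  exact hg.add_three hn
end
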